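/- Let Ω ⊆ M_nc be a similarity invariant right admissible nc set and f : Ω → N_nc a nc function. Let ℓ ≥ 0, X^0 ∈ Ω_{n_0}, ..., X^ℓ ∈ Ω_{n_ℓ}, and Z^i ∈ M^{n_{i−1}×n_i} for 1 ≤ i ≤ ℓ. Then B = bidiag(X^0,...,X^ℓ; Z^1,...,Z^ℓ) belongs to Ω_{n_0+···+n_ℓ}, and f(B), written as an (ℓ+1)×(ℓ+1) block matrix with block sizes n_0,...,n_ℓ, is block upper triangular; its (i,i) block equals f(X^{i−1}) for 1 ≤ i ≤ ℓ+1, and for 1 ≤ i < j ≤ ℓ+1 its (i,j) block equals the (1, j−i+1) block of f(bidiag(X^{i−1},...,X^{j−1}; Z^i,...,Z^{j−1})). In particular, the (i,j) block of f(B) depends only on X^{i−1},...,X^{j−1} and Z^i,...,Z^{j−1} (it is the iterated difference-differential Δ_R^{j−i} f(X^{i−1},...,X^{j−1})(Z^i,...,Z^{j−1})). -/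

import Mathlib

open Matrix

/-- Product of a scalar matrix with a matrix over a module. -/
def scalMul {R : Type*} [CommRing R] {M : Type*} [AddCommGroup M] [Module R M]
    {p n m : ℕ} (S : Matrix (Fin p) (Fin n) R) (X : Matrix (Fin n) (Fin m) M) :
    Matrix (Fin p) (Fin m) M :=
  Matrix.of fun i j => ∑ k, S i k • X k j

/-- Product of a matrix over a module with a scalar matrix. -/
def mulScal {R : Type*} [CommRing R] {M : Type*} [AddCommGroup M] [Module R M]
    {n m q : ℕ} (X : Matrix (Fin n) (Fin m) M) (T : Matrix (Fin m) (Fin q) R) :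
    Matrix (Fin n) (Fin q) M :=
  Matrix.of fun i j => ∑ k, T k j • X i k

/-- Direct sum of two square matrices over a module. -/
def dSum {M : Type*} [AddCommGroup M] {n m : ℕ}
    (X : Matrix (Fin n) (Fin n) M) (Y : Matrix (Fin m) (Fin m) M) :
    Matrix (Fin (n + m)) (Fin (n + m)) M :=
  (Matrix.reindex finSumFinEquiv finSumFinEquiv) (Matrix.fromBlocks X 0 0 Y)

/-- Block upper triangular 2×2 block matrix `[[X, Z],[0, Y]]`. -/
def upTri {M : Type*} [AddCommGroup M] {n m : ℕ}
    (X : Matrix (Fin n) (Fin n) M) (Z : Matrix (Fin n) (Fin m) M)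
    (Y : Matrix (Fin m) (Fin m) M) :
    Matrix (Fin (n + m)) (Fin (n + m)) M :=
  (Matrix.reindex finSumFinEquiv finSumFinEquiv) (Matrix.fromBlocks X Z 0 Y)

/-- A noncommutative (nc) set: closed under direct sums. -/
def IsNCSet {M : Type*} [AddCommGroup M]
    (Ω : ∀ n : ℕ, Set (Matrix (Fin n) (Fin n) M)) : Prop :=
  ∀ (n m : ℕ) (X : Matrix (Fin n) (Fin n) M) (Y : Matrix (Fin m) (Fin m) M),
    X ∈ Ω n → Y ∈ Ω m → dSum X Y ∈ Ω (n + m)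

/-- `f` respects direct sums on `Ω`. -/
def RespectsDirSums {M N : Type*} [AddCommGroup M] [AddCommGroup N]
    (Ω : ∀ n : ℕ, Set (Matrix (Fin n) (Fin n) M))
    (f : ∀ n : ℕ, Matrix (Fin n) (Fin n) M → Matrix (Fin n) (Fin n) N) : Prop :=
  ∀ (n m : ℕ) (X : Matrix (Fin n) (Fin n) M) (Y : Matrix (Fin m) (Fin m) M),
    X ∈ Ω n → Y ∈ Ω m → f (n + m) (dSum X Y) = dSum (f n X) (f m Y)

/-- `f` respects similarities on `Ω`. -/
def RespectsSim (R : Type*) [CommRing R] {M N : Type*} [AddCommGroup M] [Module R M]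
    [AddCommGroup N] [Module R N]
    (Ω : ∀ n : ℕ, Set (Matrix (Fin n) (Fin n) M))
    (f : ∀ n : ℕ, Matrix (Fin n) (Fin n) M → Matrix (Fin n) (Fin n) N) : Prop :=
  ∀ (n : ℕ) (X : Matrix (Fin n) (Fin n) M) (S T : Matrix (Fin n) (Fin n) R),
    X ∈ Ω n → S * T = 1 → T * S = 1 → scalMul S (mulScal X T) ∈ Ω n →
    f n (scalMul S (mulScal X T)) = scalMul S (mulScal (f n X) T)

/-- `f` respects intertwining on `Ω`: `X T = T Y` implies `f(X) T = T f(Y)`. -/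
def RespectsIntertwining (R : Type*) [CommRing R] {M N : Type*} [AddCommGroup M]
    [Module R M] [AddCommGroup N] [Module R N]
    (Ω : ∀ n : ℕ, Set (Matrix (Fin n) (Fin n) M))
    (f : ∀ n : ℕ, Matrix (Fin n) (Fin n) M → Matrix (Fin n) (Fin n) N) : Prop :=
  ∀ (n m : ℕ) (X : Matrix (Fin n) (Fin n) M) (Y : Matrix (Fin m) (Fin m) M)
    (T : Matrix (Fin n) (Fin m) R),
    X ∈ Ω n → Y ∈ Ω m → mulScal X T = scalMul T Y →
    mulScal (f n X) T = scalMul T (f m Y)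

/-- `Ω` is invariant under similarities. -/
def SimInvariant (R : Type*) [CommRing R] {M : Type*} [AddCommGroup M] [Module R M]
    (Ω : ∀ n : ℕ, Set (Matrix (Fin n) (Fin n) M)) : Prop :=
  ∀ (n : ℕ) (X : Matrix (Fin n) (Fin n) M) (S T : Matrix (Fin n) (Fin n) R),
    X ∈ Ω n → S * T = 1 → T * S = 1 → scalMul S (mulScal X T) ∈ Ω n

/-- `Ω` is a right admissible nc set. -/
def RightAdmissible (R : Type*) [CommRing R] {M : Type*} [AddCommGroup M] [Module R M]
    (Ω : ∀ n : ℕ, Set (Matrix (Fin n) (Fin n) M)) : Prop :=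
  ∀ (n m : ℕ) (X : Matrix (Fin n) (Fin n) M) (Y : Matrix (Fin m) (Fin m) M)
    (Z : Matrix (Fin n) (Fin m) M), X ∈ Ω n → Y ∈ Ω m →
    ∃ r : Rˣ, upTri X ((r : R) • Z) Y ∈ Ω (n + m)

/-- The block upper bidiagonal matrix with diagonal blocks `X 0, …, X l` (of sizes
`n 0, …, n l`) and superdiagonal blocks `Z 0, …, Z (l-1)`, indexed by the sigma type. -/
def bidiagS {M : Type*} [Zero M] {l : ℕ} (n : Fin (l + 1) → ℕ)
    (X : ∀ i : Fin (l + 1), Matrix (Fin (n i)) (Fin (n i)) M)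
    (Z : ∀ i : Fin l, Matrix (Fin (n i.castSucc)) (Fin (n i.succ)) M) :
    Matrix ((i : Fin (l + 1)) × Fin (n i)) ((i : Fin (l + 1)) × Fin (n i)) M :=
  Matrix.of fun p q =>
    if h : p.1 = q.1 then X p.1 p.2 (Fin.cast (congrArg n h.symm) q.2)
    else if h2 : (p.1 : ℕ) + 1 = (q.1 : ℕ) then
      Z ⟨(p.1 : ℕ), by have := q.1.isLt; omega⟩
        (Fin.cast (by apply congrArg n; apply Fin.ext; simp) p.2)
        (Fin.cast (by apply congrArg n; apply Fin.ext; simp; omega) q.2)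
    else 0

/-- A fixed identification of the sigma type with `Fin (∑ i, n i)`. -/
noncomputable def sigmaFin {l : ℕ} (n : Fin l → ℕ) :
    ((i : Fin l) × Fin (n i)) ≃ Fin (∑ i, n i) :=
  Fintype.equivFinOfCardEq (by simp)

/-- The bidiagonal matrix as a square matrix of size `∑ i, n i`. -/
noncomputable def bidiagF {M : Type*} [Zero M] {l : ℕ} (n : Fin (l + 1) → ℕ)
    (X : ∀ i : Fin (l + 1), Matrix (Fin (n i)) (Fin (n i)) M)
    (Z : ∀ i : Fin l, Matrix (Fin (n i.castSucc)) (Fin (n i.succ)) M) :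
    Matrix (Fin (∑ i, n i)) (Fin (∑ i, n i)) M :=
  (Matrix.reindex (sigmaFin n) (sigmaFin n)) (bidiagS n X Z)

/-- The `(a, b)` block of a square matrix of size `∑ i, n i`. -/
noncomputable def blkS {N : Type*} {l : ℕ} (n : Fin (l + 1) → ℕ) (a b : Fin (l + 1))
    (W : Matrix (Fin (∑ i, n i)) (Fin (∑ i, n i)) N) :
    Matrix (Fin (n a)) (Fin (n b)) N :=
  Matrix.of fun p q => W (sigmaFin n ⟨a, p⟩) (sigmaFin n ⟨b, q⟩)

/-- Reindexing of the blocks from `a` to `b` (for `a ≤ b`) used for sub-bidiagonal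
matrices. -/
def subIdx {l : ℕ} {a b : Fin (l + 1)} (hab : (a : ℕ) ≤ (b : ℕ))
    (t : Fin ((b : ℕ) - (a : ℕ) + 1)) : Fin (l + 1) :=
  ⟨(a : ℕ) + (t : ℕ), by have := t.isLt; have := b.isLt; omega⟩

/-!
An nc function respects intertwinings: if `X T = T Y` over `R`, then `f(X) T = T f(Y)`, because
the shear `[[1, T], [0, 1]]` conjugates `X ⊕ Y` to itself. Intertwining `B` with the inclusion
of (or the projection onto) a set of coordinates spanning a `B`-invariant (or co-invariant)
subspace shows that the corresponding compression of `f(B)` is `f` of the compression of `B`.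
For a bidiagonal `B`, the leading blocks `0, …, b` are invariant and the trailing blocks
`a, …, ℓ` co-invariant; compressing to the trailing blocks from `a` gives the vanishing of
`f(B)` below the diagonal in block row `a`, and compressing further to the leading blocks up
to `b` (to `X^a` itself when `b = a`) identifies block `(a, b)`. Membership `B ∈ Ω` is by induction on `ℓ`: right
admissibility puts `[[B', r Z], [0, X^ℓ]]` in `Ω` for some unit `r`, and conjugating by
`diag(r⁻¹, 1)` removes `r`.
-/

open Function

section ModuleMatrix

variable {R : Type*} [CommRing R] {M : Type*} [AddCommGroup M] [Module R M]
  {α β γ α' β' γ' : Type*}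

def scalMul' [Fintype β] (S : Matrix α β R) (X : Matrix β γ M) : Matrix α γ M :=
  of fun i j => ∑ k, S i k • X k j

def mulScal' [Fintype β] (X : Matrix α β M) (T : Matrix β γ R) : Matrix α γ M :=
  of fun i j => ∑ k, T k j • X i k

theorem scalMul_eq_scalMul' {p n m : ℕ} (S : Matrix (Fin p) (Fin n) R)
    (X : Matrix (Fin n) (Fin m) M) : scalMul S X = scalMul' S X := rfl

theorem mulScal_eq_mulScal' {n m q : ℕ} (X : Matrix (Fin n) (Fin m) M)
    (T : Matrix (Fin m) (Fin q) R) : mulScal X T = mulScal' X T := rfl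

variable [Fintype β] [Fintype β']

theorem scalMul'_submatrix (S : Matrix α β R) (X : Matrix β γ M) (r : α' → α) (e : β' ≃ β)
    (c : γ' → γ) : scalMul' (S.submatrix r e) (X.submatrix e c) = (scalMul' S X).submatrix r c := by
  ext i j
  exact Fintype.sum_equiv e _ _ fun _ => rfl

theorem mulScal'_submatrix (X : Matrix α β M) (T : Matrix β γ R) (r : α' → α) (e : β' ≃ β)
    (c : γ' → γ) : mulScal' (X.submatrix r e) (T.submatrix e c) = (mulScal' X T).submatrix r c := by
  ext i j
  exact Fintype.sum_equiv e _ _ fun _ => rfl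

theorem scalMul'_fromBlocks (A : Matrix α β R) (B : Matrix α β' R) (C : Matrix α' β R)
    (D : Matrix α' β' R) (X : Matrix β γ M) (Y : Matrix β γ' M) (Z : Matrix β' γ M)
    (W : Matrix β' γ' M) :
    scalMul' (fromBlocks A B C D) (fromBlocks X Y Z W) =
      fromBlocks (scalMul' A X + scalMul' B Z) (scalMul' A Y + scalMul' B W)
        (scalMul' C X + scalMul' D Z) (scalMul' C Y + scalMul' D W) := by
  ext (i | i) (j | j) <;> simp [scalMul', Fintype.sum_sum_type]

theorem mulScal'_fromBlocks (X : Matrix α β M) (Y : Matrix α β' M) (Z : Matrix α' β M)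
    (W : Matrix α' β' M) (A : Matrix β γ R) (B : Matrix β γ' R) (C : Matrix β' γ R)
    (D : Matrix β' γ' R) :
    mulScal' (fromBlocks X Y Z W) (fromBlocks A B C D) =
      fromBlocks (mulScal' X A + mulScal' Y C) (mulScal' X B + mulScal' Y D)
        (mulScal' Z A + mulScal' W C) (mulScal' Z B + mulScal' W D) := by
  ext (i | i) (j | j) <;> simp [mulScal', Fintype.sum_sum_type]

@[simp]
theorem scalMul'_zero (S : Matrix α β R) : scalMul' S (0 : Matrix β γ M) = 0 := by
  ext; simp [scalMul']

@[simp]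
theorem zero_scalMul' (X : Matrix β γ M) : scalMul' (0 : Matrix α β R) X = 0 := by
  ext; simp [scalMul']

@[simp]
theorem mulScal'_zero (X : Matrix α β M) : mulScal' X (0 : Matrix β γ R) = 0 := by
  ext; simp [mulScal']

@[simp]
theorem zero_mulScal' (T : Matrix β γ R) : mulScal' (0 : Matrix α β M) T = 0 := by
  ext; simp [mulScal']

@[simp]
theorem mulScal'_neg (X : Matrix α β M) (T : Matrix β γ R) :
    mulScal' X (-T) = -mulScal' X T := by
  ext; simp [mulScal']

@[simp]
theorem smul_one_scalMul' [DecidableEq β] (r : R) (X : Matrix β γ M) :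
    scalMul' (r • (1 : Matrix β β R)) X = r • X := by
  ext; simp [scalMul', one_apply, ite_smul]

@[simp]
theorem mulScal'_smul_one [DecidableEq β] (r : R) (X : Matrix α β M) :
    mulScal' X (r • (1 : Matrix β β R)) = r • X := by
  ext; simp [mulScal', one_apply, ite_smul]

@[simp]
theorem one_scalMul' [DecidableEq β] (X : Matrix β γ M) : scalMul' (1 : Matrix β β R) X = X := by
  simpa using smul_one_scalMul' (1 : R) X

@[simp]
theorem mulScal'_one [DecidableEq β] (X : Matrix α β M) : mulScal' X (1 : Matrix β β R) = X := by
  simpa using mulScal'_smul_one (1 : R) X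

end ModuleMatrix

section InclMat

variable {R : Type*} [CommRing R] {M : Type*} [AddCommGroup M] [Module R M] {p n m : ℕ}

def inclMat (R : Type*) [CommRing R] (φ : Fin m → Fin n) : Matrix (Fin n) (Fin m) R :=
  of fun i k => if i = φ k then 1 else 0

theorem mulScal_inclMat (X : Matrix (Fin p) (Fin n) M) (φ : Fin m → Fin n) :
    mulScal X (inclMat R φ) = X.submatrix id φ := by
  ext i k; simp [mulScal, inclMat, ite_smul]

theorem scalMul_transpose_inclMat (φ : Fin m → Fin n) (Y : Matrix (Fin n) (Fin p) M) :
    scalMul (inclMat R φ)ᵀ Y = Y.submatrix φ id := by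
  ext k j; simp [scalMul, inclMat, ite_smul]

variable {φ : Fin m → Fin n}

theorem scalMul_inclMat_apply (hφ : Injective φ) (Y : Matrix (Fin m) (Fin p) M) (k : Fin m)
    (j : Fin p) : scalMul (inclMat R φ) Y (φ k) j = Y k j := by
  simp [scalMul, inclMat, hφ.eq_iff, ite_smul]

theorem scalMul_inclMat_apply_of_notMem (Y : Matrix (Fin m) (Fin p) M) {i : Fin n}
    (hi : i ∉ Set.range φ) (j : Fin p) : scalMul (inclMat R φ) Y i j = 0 := by
  simp only [scalMul, of_apply]
  refine Finset.sum_eq_zero fun k _ => ?_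
  simp [inclMat, show i ≠ φ k from fun h => hi ⟨k, h.symm⟩]

theorem mulScal_transpose_inclMat_apply (hφ : Injective φ) (X : Matrix (Fin p) (Fin m) M)
    (i : Fin p) (k : Fin m) : mulScal X (inclMat R φ)ᵀ i (φ k) = X i k := by
  simp [mulScal, inclMat, hφ.eq_iff, ite_smul]

theorem mulScal_transpose_inclMat_apply_of_notMem (X : Matrix (Fin p) (Fin m) M) (i : Fin p)
    {j : Fin n} (hj : j ∉ Set.range φ) : mulScal X (inclMat R φ)ᵀ i j = 0 := by
  simp only [mulScal, of_apply]
  refine Finset.sum_eq_zero fun k _ => ?_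
  simp [inclMat, show j ≠ φ k from fun h => hj ⟨k, h.symm⟩]

theorem transpose_inclMat_mul_inclMat (hφ : Injective φ) : (inclMat R φ)ᵀ * inclMat R φ = 1 := by
  ext k k'; simp [inclMat, mul_apply, one_apply, hφ.eq_iff, eq_comm]

end InclMat

section NCSets

variable {R : Type*} [CommRing R] {M : Type*} [AddCommGroup M] [Module R M]
  {Ω : ∀ n : ℕ, Set (Matrix (Fin n) (Fin n) M)}

theorem SimInvariant.submatrix_mem (hsi : SimInvariant R Ω) {k k' : ℕ} (e : Fin k' ≃ Fin k)
    {X : Matrix (Fin k) (Fin k) M} (hX : X ∈ Ω k) : X.submatrix e e ∈ Ω k' := by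
  obtain rfl : k' = k := by simpa using Fintype.card_congr e
  have hTS := transpose_inclMat_mul_inclMat (R := R) e.injective
  have h := hsi k' X (inclMat R e)ᵀ (inclMat R e) hX hTS (mul_eq_one_comm.mp hTS)
  rwa [mulScal_inclMat, scalMul_transpose_inclMat, submatrix_submatrix] at h

theorem SimInvariant.upTri_mem_of_smul_mem (hsi : SimInvariant R Ω) {n m : ℕ}
    {X : Matrix (Fin n) (Fin n) M} {Y : Matrix (Fin m) (Fin m) M} {Z : Matrix (Fin n) (Fin m) M}
    (r : Rˣ) (h : upTri X ((r : R) • Z) Y ∈ Ω (n + m)) : upTri X Z Y ∈ Ω (n + m) := by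
  let S : Matrix (Fin (n + m)) (Fin (n + m)) R :=
    (fromBlocks (((r⁻¹ : Rˣ) : R) • 1) 0 0 1).submatrix finSumFinEquiv.symm finSumFinEquiv.symm
  let T : Matrix (Fin (n + m)) (Fin (n + m)) R :=
    (fromBlocks ((r : R) • 1) 0 0 1).submatrix finSumFinEquiv.symm finSumFinEquiv.symm
  have hST : S * T = 1 := by
    simp [S, T, submatrix_mul_equiv, fromBlocks_multiply, smul_smul]
  have hconj : scalMul S (mulScal (upTri X ((r : R) • Z) Y) T) = upTri X Z Y := by
    simp only [scalMul_eq_scalMul', mulScal_eq_mulScal', upTri, reindex_apply, S, T]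
    rw [mulScal'_submatrix, scalMul'_submatrix, mulScal'_fromBlocks, scalMul'_fromBlocks]
    simp [smul_smul]
  simpa [hconj] using hsi _ _ S T h hST (mul_eq_one_comm.mp hST)

theorem RightAdmissible.upTri_mem (hra : RightAdmissible R Ω) (hsi : SimInvariant R Ω)
    {n m : ℕ} {X : Matrix (Fin n) (Fin n) M} {Y : Matrix (Fin m) (Fin m) M}
    (Z : Matrix (Fin n) (Fin m) M) (hX : X ∈ Ω n) (hY : Y ∈ Ω m) : upTri X Z Y ∈ Ω (n + m) := by
  obtain ⟨r, hr⟩ := hra n m X Y Z hX hY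
  exact hsi.upTri_mem_of_smul_mem r hr

end NCSets

section Shear

variable {R : Type*} [CommRing R] {M : Type*} [AddCommGroup M] [Module R M] {n m : ℕ}

def shearMat (T : Matrix (Fin n) (Fin m) R) : Matrix (Fin (n + m)) (Fin (n + m)) R :=
  (fromBlocks 1 T 0 1).submatrix finSumFinEquiv.symm finSumFinEquiv.symm

theorem shearMat_mul_shearMat_neg (T : Matrix (Fin n) (Fin m) R) :
    shearMat T * shearMat (-T) = 1 := by
  simp [shearMat, submatrix_mul_equiv, fromBlocks_multiply]

theorem shearMat_conj_dSum (T : Matrix (Fin n) (Fin m) R) (A : Matrix (Fin n) (Fin n) M)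
    (B : Matrix (Fin m) (Fin m) M) :
    scalMul (shearMat T) (mulScal (dSum A B) (shearMat (-T))) =
      upTri A (-mulScal A T + scalMul T B) B := by
  simp only [scalMul_eq_scalMul', mulScal_eq_mulScal', dSum, upTri, reindex_apply, shearMat]
  rw [mulScal'_submatrix, scalMul'_submatrix, mulScal'_fromBlocks, scalMul'_fromBlocks]
  simp

end Shear

section NCFunctions

variable {R : Type*} [CommRing R] {M : Type*} [AddCommGroup M] [Module R M]
  {N : Type*} [AddCommGroup N] [Module R N]
  {Ω : ∀ n : ℕ, Set (Matrix (Fin n) (Fin n) M)}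
  {f : ∀ n : ℕ, Matrix (Fin n) (Fin n) M → Matrix (Fin n) (Fin n) N}

theorem respectsIntertwining_of_respectsSim (hΩ : IsNCSet Ω) (hds : RespectsDirSums Ω f)
    (hsim : RespectsSim R Ω f) : RespectsIntertwining R Ω f := by
  intro n m X Y T hX hY hXT
  have hD := hΩ n m X Y hX hY
  have hconj : scalMul (shearMat T) (mulScal (dSum X Y) (shearMat (-T))) = dSum X Y := by
    rw [shearMat_conj_dSum, hXT, neg_add_cancel]; rfl
  have hT := shearMat_mul_shearMat_neg T
  have hfD := hsim _ _ _ _ hD hT (mul_eq_one_comm.mp hT) (by rwa [hconj])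
  rw [hconj, hds n m X Y hX hY, shearMat_conj_dSum] at hfD
  ext i j
  simpa [dSum, upTri, neg_add_eq_zero, eq_comm] using
    congr_fun₂ hfD (finSumFinEquiv (Sum.inl i)) (finSumFinEquiv (Sum.inr j))

variable {n m : ℕ} {B : Matrix (Fin n) (Fin n) M} {B' : Matrix (Fin m) (Fin m) M}
  {φ : Fin m → Fin n}

theorem RespectsIntertwining.apply_of_invariant (hf : RespectsIntertwining R Ω f)
    (hB : B ∈ Ω n) (hB' : B' ∈ Ω m) (hφ : Injective φ)
    (hres : ∀ k k', B (φ k) (φ k') = B' k k')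
    (hinv : ∀ i k, i ∉ Set.range φ → B i (φ k) = 0) (k k' : Fin m) :
    f n B (φ k) (φ k') = f m B' k k' := by
  have hint : mulScal B (inclMat R φ) = scalMul (inclMat R φ) B' := by
    ext i k
    rw [mulScal_inclMat, submatrix_apply, id]
    by_cases hi : i ∈ Set.range φ
    · obtain ⟨k', rfl⟩ := hi
      rw [scalMul_inclMat_apply hφ, hres]
    · rw [scalMul_inclMat_apply_of_notMem _ hi, hinv i k hi]
  have h := congr_fun₂ (hf n m B B' _ hB hB' hint) (φ k) k'
  rwa [mulScal_inclMat, scalMul_inclMat_apply hφ] at h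

theorem RespectsIntertwining.apply_of_coinvariant (hf : RespectsIntertwining R Ω f)
    (hB : B ∈ Ω n) (hB' : B' ∈ Ω m) (hφ : Injective φ)
    (hres : ∀ k k', B (φ k) (φ k') = B' k k')
    (hcoinv : ∀ k j, j ∉ Set.range φ → B (φ k) j = 0) :
    (∀ k k', f n B (φ k) (φ k') = f m B' k k') ∧
      ∀ k j, j ∉ Set.range φ → f n B (φ k) j = 0 := by
  have hint : mulScal B' (inclMat R φ)ᵀ = scalMul (inclMat R φ)ᵀ B := by
    ext k j
    rw [scalMul_transpose_inclMat, submatrix_apply, id]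
    by_cases hj : j ∈ Set.range φ
    · obtain ⟨k', rfl⟩ := hj
      rw [mulScal_transpose_inclMat_apply hφ, hres]
    · rw [mulScal_transpose_inclMat_apply_of_notMem _ _ hj, hcoinv k j hj]
  have h := congr_fun₂ (hf m n B' B _ hB' hB hint)
  simp only [scalMul_transpose_inclMat, submatrix_apply, id] at h
  refine ⟨fun k k' => ?_, fun k j hj => ?_⟩
  · rw [← h, mulScal_transpose_inclMat_apply hφ]
  · rw [← h, mulScal_transpose_inclMat_apply_of_notMem _ _ hj]

end NCFunctions

section NCFunctionsReindex

variable {R : Type*} [CommRing R] {M : Type*} [AddCommGroup M] [Module R M]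
  {N : Type*} [AddCommGroup N] [Module R N]
  {Ω : ∀ n : ℕ, Set (Matrix (Fin n) (Fin n) M)}
  {f : ∀ n : ℕ, Matrix (Fin n) (Fin n) M → Matrix (Fin n) (Fin n) N}
  {n m : ℕ} {α β : Type*} (eα : α ≃ Fin m) (eβ : β ≃ Fin n)
  {B : Matrix β β M} {B' : Matrix α α M} {ψ : α → β}

theorem RespectsIntertwining.apply_reindex_of_invariant (hf : RespectsIntertwining R Ω f)
    (hB : reindex eβ eβ B ∈ Ω n) (hB' : reindex eα eα B' ∈ Ω m) (hψ : Injective ψ)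
    (hres : ∀ u v, B (ψ u) (ψ v) = B' u v) (hinv : ∀ w u, w ∉ Set.range ψ → B w (ψ u) = 0)
    (u v : α) :
    f n (reindex eβ eβ B) (eβ (ψ u)) (eβ (ψ v)) = f m (reindex eα eα B') (eα u) (eα v) := by
  simpa using hf.apply_of_invariant (φ := eβ ∘ ψ ∘ eα.symm) hB hB'
    (eβ.injective.comp (hψ.comp eα.symm.injective)) (by simpa using fun k k' => hres _ _)
    (fun i k hi => by
      simpa using hinv (eβ.symm i) _ fun ⟨u, hu⟩ => hi ⟨eα u, by simp [hu]⟩)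
    (eα u) (eα v)

theorem RespectsIntertwining.apply_reindex_of_coinvariant (hf : RespectsIntertwining R Ω f)
    (hB : reindex eβ eβ B ∈ Ω n) (hB' : reindex eα eα B' ∈ Ω m) (hψ : Injective ψ)
    (hres : ∀ u v, B (ψ u) (ψ v) = B' u v) (hcoinv : ∀ u w, w ∉ Set.range ψ → B (ψ u) w = 0) :
    (∀ u v, f n (reindex eβ eβ B) (eβ (ψ u)) (eβ (ψ v)) = f m (reindex eα eα B') (eα u) (eα v)) ∧
      ∀ u w, w ∉ Set.range ψ → f n (reindex eβ eβ B) (eβ (ψ u)) (eβ w) = 0 := by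
  obtain ⟨h₁, h₂⟩ := hf.apply_of_coinvariant (φ := eβ ∘ ψ ∘ eα.symm) hB hB'
    (eβ.injective.comp (hψ.comp eα.symm.injective)) (by simpa using fun k k' => hres _ _)
    (fun k j hj => by
      simpa using hcoinv _ (eβ.symm j) fun ⟨u, hu⟩ => hj ⟨eα u, by simp [hu]⟩)
  refine ⟨fun u v => by simpa using h₁ (eα u) (eα v), fun u w hw => ?_⟩
  simpa using h₂ (eα u) (eβ w) fun ⟨k, hk⟩ => hw ⟨eα.symm k, eβ.injective hk⟩

end NCFunctionsReindex

theorem sigma_mk_finCast {ι : Type*} {n : ι → ℕ} {i j : ι} (h : i = j) (x : Fin (n i)) :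
    (⟨j, Fin.cast (congrArg n h) x⟩ : (i : ι) × Fin (n i)) = ⟨i, x⟩ := by
  subst h; rfl

section BidiagEntries

variable {M : Type*} [Zero M] {l : ℕ} (n : Fin (l + 1) → ℕ)
  (X : ∀ i : Fin (l + 1), Matrix (Fin (n i)) (Fin (n i)) M)
  (Z : ∀ i : Fin l, Matrix (Fin (n i.castSucc)) (Fin (n i.succ)) M)

@[simp]
theorem bidiagF_apply_sigmaFin (u v : (i : Fin (l + 1)) × Fin (n i)) :
    bidiagF n X Z (sigmaFin n u) (sigmaFin n v) = bidiagS n X Z u v := by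
  simp [bidiagF]

theorem bidiagS_apply_self (i : Fin (l + 1)) (x y : Fin (n i)) :
    bidiagS n X Z ⟨i, x⟩ ⟨i, y⟩ = X i x y := by
  simp [bidiagS]

theorem bidiagS_apply_of_lt {i j : Fin (l + 1)} (h : j < i) (x : Fin (n i)) (y : Fin (n j)) :
    bidiagS n X Z ⟨i, x⟩ ⟨j, y⟩ = 0 := by
  rw [Fin.lt_def] at h
  simp only [bidiagS, of_apply, dif_neg (Fin.ne_of_val_ne (by omega : (i : ℕ) ≠ j))]
  rw [dif_neg (by omega)]

theorem bidiagS_castLE {l' : ℕ} (h : l' ≤ l) (s t : Fin (l' + 1))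
    (x : Fin (n (Fin.castLE (by omega) s))) (y : Fin (n (Fin.castLE (by omega) t))) :
    bidiagS n X Z ⟨Fin.castLE (by omega) s, x⟩ ⟨Fin.castLE (by omega) t, y⟩ =
      bidiagS (fun i => n (Fin.castLE (by omega) i)) (fun i => X (Fin.castLE (by omega) i))
        (fun i => Z (Fin.castLE h i)) ⟨s, x⟩ ⟨t, y⟩ := by
  simp only [bidiagS, of_apply, Fin.castLE_inj, Fin.val_castLE]
  rfl

theorem bidiagS_castLE_natAdd {a l' : ℕ} (h : a + l' = l) (s t : Fin (l' + 1))
    (x : Fin (n (Fin.castLE (by omega) (Fin.natAdd a s))))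
    (y : Fin (n (Fin.castLE (by omega) (Fin.natAdd a t)))) :
    bidiagS n X Z ⟨Fin.castLE (by omega) (Fin.natAdd a s), x⟩
        ⟨Fin.castLE (by omega) (Fin.natAdd a t), y⟩ =
      bidiagS (fun i => n (Fin.castLE (by omega) (Fin.natAdd a i)))
        (fun i => X (Fin.castLE (by omega) (Fin.natAdd a i)))
        (fun i => Z (Fin.castLE h.le (Fin.natAdd a i))) ⟨s, x⟩ ⟨t, y⟩ := by
  simp only [bidiagS, of_apply, Fin.castLE_inj, Fin.natAdd_inj, Fin.val_castLE, Fin.val_natAdd,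
    add_assoc, Nat.add_left_cancel_iff]
  rfl

end BidiagEntries

def sigmaSplitLast {l : ℕ} (n : Fin (l + 2) → ℕ) :
    ((i : Fin (l + 2)) × Fin (n i)) ≃
      ((i : Fin (l + 1)) × Fin (n i.castSucc)) ⊕ Fin (n (Fin.last (l + 1))) :=
  ((finSumFinEquiv (m := l + 1) (n := 1)).sigmaCongrLeft (β := fun i => Fin (n i))).symm.trans
    ((Equiv.sumSigmaDistrib _).trans (Equiv.sumCongr (Equiv.refl _) (Equiv.uniqueSigma _)))

section BidiagSplit

variable {M : Type*} [Zero M] {l : ℕ} (n : Fin (l + 2) → ℕ)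
  (X : ∀ i : Fin (l + 2), Matrix (Fin (n i)) (Fin (n i)) M)
  (Z : ∀ i : Fin (l + 1), Matrix (Fin (n i.castSucc)) (Fin (n i.succ)) M)

theorem bidiagS_submatrix_sigmaSplitLast :
    (bidiagS n X Z).submatrix (sigmaSplitLast n).symm (sigmaSplitLast n).symm =
      fromBlocks (bidiagS (fun i => n i.castSucc) (fun i => X i.castSucc) (fun i => Z i.castSucc))
        (of fun u y => bidiagS n X Z ⟨u.1.castSucc, u.2⟩ ⟨Fin.last _, y⟩) 0 (X (Fin.last _)) := by
  ext (⟨i, x⟩ | x) (⟨j, y⟩ | y)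
  · exact bidiagS_castLE n X Z (Nat.le_succ l) i j x y
  · rfl
  · exact bidiagS_apply_of_lt n X Z (Fin.castSucc_lt_last j) x y
  · exact bidiagS_apply_self n X Z _ x y

end BidiagSplit

section BidiagNC

variable {R : Type*} [CommRing R] {M : Type*} [AddCommGroup M] [Module R M]
  {N : Type*} [AddCommGroup N] [Module R N]
  {Ω : ∀ n : ℕ, Set (Matrix (Fin n) (Fin n) M)}
  {f : ∀ n : ℕ, Matrix (Fin n) (Fin n) M → Matrix (Fin n) (Fin n) N}

theorem bidiagF_mem (hsi : SimInvariant R Ω) (hra : RightAdmissible R Ω) :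
    ∀ {l : ℕ} (n : Fin (l + 1) → ℕ) (X : ∀ i : Fin (l + 1), Matrix (Fin (n i)) (Fin (n i)) M)
      (Z : ∀ i : Fin l, Matrix (Fin (n i.castSucc)) (Fin (n i.succ)) M),
      (∀ i, X i ∈ Ω (n i)) → bidiagF n X Z ∈ Ω (∑ i, n i)
  | 0, n, X, Z, hX => by
    let g := (sigmaFin n).symm.trans (Equiv.uniqueSigma (α := Fin 1) fun i => Fin (n i))
    convert hsi.submatrix_mem g (hX default)
    ext u v
    obtain ⟨⟨i, x⟩, rfl⟩ := (sigmaFin n).surjective u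
    obtain ⟨⟨j, y⟩, rfl⟩ := (sigmaFin n).surjective v
    obtain rfl := Subsingleton.elim (α := Fin 1) i default
    obtain rfl := Subsingleton.elim (α := Fin 1) j default
    simp [g]
    rfl
  | l + 1, n, X, Z, hX => by
    let e := sigmaFin fun i : Fin (l + 1) => n i.castSucc
    let g := (sigmaFin n).symm.trans ((sigmaSplitLast n).trans
      ((e.sumCongr (Equiv.refl _)).trans finSumFinEquiv))
    have hU := hra.upTri_mem hsi
      ((of fun u y => bidiagS n X Z ⟨u.1.castSucc, u.2⟩ ⟨Fin.last _, y⟩).submatrix e.symm id)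
      (bidiagF_mem hsi hra _ (fun i => X i.castSucc) (fun i => Z i.castSucc) fun i => hX _)
      (hX (Fin.last _))
    convert hsi.submatrix_mem g hU
    ext u v
    obtain ⟨u, rfl⟩ := ((sigmaSplitLast n).symm.trans (sigmaFin n)).surjective u
    obtain ⟨v, rfl⟩ := ((sigmaSplitLast n).symm.trans (sigmaFin n)).surjective v
    have h := congr_fun₂ (bidiagS_submatrix_sigmaSplitLast n X Z) u v
    rcases u with ⟨i, x⟩ | x <;> rcases v with ⟨j, y⟩ | y <;> simpa [g, e, upTri] using h

variable {l : ℕ} {n : Fin (l + 1) → ℕ} {X : ∀ i : Fin (l + 1), Matrix (Fin (n i)) (Fin (n i)) M}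

theorem RespectsIntertwining.apply_bidiagF_zero_zero (hf : RespectsIntertwining R Ω f)
    (hsi : SimInvariant R Ω) (hra : RightAdmissible R Ω)
    (Z : ∀ i : Fin l, Matrix (Fin (n i.castSucc)) (Fin (n i.succ)) M) (hX : ∀ i, X i ∈ Ω (n i))
    (x y : Fin (n ⟨0, l.succ_pos⟩)) :
    f (∑ i, n i) (bidiagF n X Z) (sigmaFin n ⟨⟨0, l.succ_pos⟩, x⟩)
        (sigmaFin n ⟨⟨0, l.succ_pos⟩, y⟩) =
      f (n ⟨0, l.succ_pos⟩) (X ⟨0, l.succ_pos⟩) x y := by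
  refine hf.apply_reindex_of_invariant (Equiv.refl _) (sigmaFin n) (B' := X ⟨0, l.succ_pos⟩)
    (ψ := Sigma.mk (β := fun i => Fin (n i)) ⟨0, l.succ_pos⟩) (bidiagF_mem hsi hra n X Z hX)
    (hX _) sigma_mk_injective (bidiagS_apply_self n X Z _) ?_ x y
  rintro ⟨j, y⟩ x hj
  refine bidiagS_apply_of_lt n X Z (Fin.lt_def.mpr (Nat.pos_of_ne_zero fun h => hj ?_)) y x
  obtain rfl : j = ⟨0, l.succ_pos⟩ := Fin.ext h
  exact ⟨y, rfl⟩

theorem RespectsIntertwining.apply_bidiagF_castLE (hf : RespectsIntertwining R Ω f)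
    (hsi : SimInvariant R Ω) (hra : RightAdmissible R Ω)
    (Z : ∀ i : Fin l, Matrix (Fin (n i.castSucc)) (Fin (n i.succ)) M) (hX : ∀ i, X i ∈ Ω (n i))
    {l' : ℕ} (h : l' ≤ l) (s t : Fin (l' + 1))
    (x : Fin (n (Fin.castLE (by omega) s))) (y : Fin (n (Fin.castLE (by omega) t))) :
    f (∑ i, n i) (bidiagF n X Z) (sigmaFin n ⟨Fin.castLE (by omega) s, x⟩)
        (sigmaFin n ⟨Fin.castLE (by omega) t, y⟩) =
      f _ (bidiagF (fun i => n (Fin.castLE (by omega) i)) (fun i => X (Fin.castLE (by omega) i))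
          (fun i => Z (Fin.castLE h i))) (sigmaFin _ ⟨s, x⟩) (sigmaFin _ ⟨t, y⟩) := by
  refine hf.apply_reindex_of_invariant (sigmaFin _) (sigmaFin n)
    (ψ := Sigma.map (Fin.castLE (by omega)) fun _ => id) (bidiagF_mem hsi hra n X Z hX)
    (bidiagF_mem hsi hra _ _ _ fun _ => hX _)
    ((Fin.castLE_injective _).sigma_map fun _ => injective_id)
    (fun ⟨s, x⟩ ⟨t, y⟩ => bidiagS_castLE n X Z h s t x y) ?_ ⟨s, x⟩ ⟨t, y⟩
  rintro ⟨j, x⟩ ⟨t, y⟩ hj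
  have hlt : l' < (j : ℕ) := by
    by_contra! hle
    exact hj ⟨⟨⟨j, by omega⟩, x⟩, rfl⟩
  exact bidiagS_apply_of_lt n X Z (Fin.lt_def.mpr (by simp; omega)) x y

theorem RespectsIntertwining.apply_bidiagF_castLE_natAdd (hf : RespectsIntertwining R Ω f)
    (hsi : SimInvariant R Ω) (hra : RightAdmissible R Ω)
    (Z : ∀ i : Fin l, Matrix (Fin (n i.castSucc)) (Fin (n i.succ)) M) (hX : ∀ i, X i ∈ Ω (n i))
    {a l' : ℕ} (h : a + l' = l) :
    (∀ (s t : Fin (l' + 1)) (x : Fin (n (Fin.castLE (by omega) (Fin.natAdd a s))))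
        (y : Fin (n (Fin.castLE (by omega) (Fin.natAdd a t)))),
      f (∑ i, n i) (bidiagF n X Z) (sigmaFin n ⟨Fin.castLE (by omega) (Fin.natAdd a s), x⟩)
          (sigmaFin n ⟨Fin.castLE (by omega) (Fin.natAdd a t), y⟩) =
        f _ (bidiagF (fun i => n (Fin.castLE (by omega) (Fin.natAdd a i)))
            (fun i => X (Fin.castLE (by omega) (Fin.natAdd a i)))
            (fun i => Z (Fin.castLE h.le (Fin.natAdd a i))))
          (sigmaFin _ ⟨s, x⟩) (sigmaFin _ ⟨t, y⟩)) ∧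
    ∀ (s : Fin (l' + 1)) (x : Fin (n (Fin.castLE (by omega) (Fin.natAdd a s)))) (j : Fin (l + 1))
      (y : Fin (n j)), (j : ℕ) < a →
      f (∑ i, n i) (bidiagF n X Z) (sigmaFin n ⟨Fin.castLE (by omega) (Fin.natAdd a s), x⟩)
        (sigmaFin n ⟨j, y⟩) = 0 := by
  let ψ := Sigma.map (β₂ := fun i => Fin (n i))
    (Fin.castLE (by omega : a + (l' + 1) ≤ l + 1) ∘ Fin.natAdd a) fun _ => id
  have hrange : ∀ (j : Fin (l + 1)) (y : Fin (n j)), ⟨j, y⟩ ∉ Set.range ψ ↔ (j : ℕ) < a := by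
    refine fun j y => ⟨fun hj => ?_, fun hj ⟨⟨t, z⟩, htj⟩ => ?_⟩
    · by_contra! hja
      exact hj ⟨⟨⟨j - a, by omega⟩, Fin.cast (congrArg n (Fin.ext (by simp; omega))) y⟩,
        sigma_mk_finCast (Fin.ext (by simp; omega)) y⟩
    · have := congrArg (fun u => (u.1 : ℕ)) htj
      simp [ψ, Sigma.map] at this
      omega
  obtain ⟨h₁, h₂⟩ := hf.apply_reindex_of_coinvariant (sigmaFin _) (sigmaFin n) (ψ := ψ)
    (bidiagF_mem hsi hra n X Z hX) (bidiagF_mem hsi hra _ _ _ fun _ => hX _)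
    (((Fin.castLE_injective _).comp (Fin.natAdd_injective _ _)).sigma_map fun _ => injective_id)
    (fun ⟨s, x⟩ ⟨t, y⟩ => bidiagS_castLE_natAdd n X Z h s t x y)
    (fun ⟨s, x⟩ ⟨j, y⟩ hj => bidiagS_apply_of_lt n X Z
      (Fin.lt_def.mpr (by have := (hrange j y).mp hj; simp; omega)) x y)
  exact ⟨fun s t x y => h₁ ⟨s, x⟩ ⟨t, y⟩, fun s x j y hj => h₂ ⟨s, x⟩ ⟨j, y⟩ ((hrange j y).mpr hj)⟩

end BidiagNC

/-- For a nc function `f` on a similarity invariant right admissible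
nc set `Ω` and `X^i ∈ Ω_{n_i}`, the bidiagonal matrix `B` lies in `Ω`, `f(B)` is block
upper triangular with diagonal blocks `f(X^i)`, and its `(a, b)` block (for `a < b`) is
the upper right corner block of `f` applied to the sub-bidiagonal matrix built from
`X^a, …, X^b` and `Z^a, …, Z^{b-1}`. -/
theorem nc_function_on_bidiagonal
    {R : Type*} [CommRing R] {M : Type*} [AddCommGroup M] [Module R M]
    {N : Type*} [AddCommGroup N] [Module R N]
    (Ω : ∀ n : ℕ, Set (Matrix (Fin n) (Fin n) M))
    (f : ∀ n : ℕ, Matrix (Fin n) (Fin n) M → Matrix (Fin n) (Fin n) N)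
    (hΩ : IsNCSet Ω) (hsi : SimInvariant R Ω) (hra : RightAdmissible R Ω)
    (hds : RespectsDirSums Ω f) (hsim : RespectsSim R Ω f)
    {l : ℕ} (n : Fin (l + 1) → ℕ)
    (X : ∀ i : Fin (l + 1), Matrix (Fin (n i)) (Fin (n i)) M)
    (Z : ∀ i : Fin l, Matrix (Fin (n i.castSucc)) (Fin (n i.succ)) M)
    (hX : ∀ i, X i ∈ Ω (n i)) :
    bidiagF n X Z ∈ Ω (∑ i, n i) ∧
    (∀ a b : Fin (l + 1), (b : ℕ) < (a : ℕ) →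
      blkS n a b (f (∑ i, n i) (bidiagF n X Z)) = 0) ∧
    (∀ a : Fin (l + 1),
      blkS n a a (f (∑ i, n i) (bidiagF n X Z)) = f (n a) (X a)) ∧
    (∀ a b : Fin (l + 1), ∀ hab : (a : ℕ) < (b : ℕ),
      blkS n a b (f (∑ i, n i) (bidiagF n X Z)) =
        (blkS (fun t => n (subIdx hab.le t)) ⟨0, by omega⟩ (Fin.last ((b : ℕ) - (a : ℕ)))
          (f (∑ t, n (subIdx hab.le t))
            (bidiagF (fun t => n (subIdx hab.le t)) (fun t => X (subIdx hab.le t))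
              (fun t =>
                (Z ⟨(a : ℕ) + (t : ℕ), by have := t.isLt; have := b.isLt; omega⟩).submatrix
                  (Fin.cast (by apply congrArg n; apply Fin.ext; simp [subIdx]))
                  (Fin.cast (by apply congrArg n; apply Fin.ext; simp [subIdx]; omega)))))
        ).submatrix
          (Fin.cast (by apply congrArg n; apply Fin.ext; simp [subIdx]))
          (Fin.cast (by apply congrArg n; apply Fin.ext; simp [subIdx]; omega))) := by
  have hf := respectsIntertwining_of_respectsSim hΩ hds hsim
  have hwin := fun a : Fin (l + 1) =>
    hf.apply_bidiagF_castLE_natAdd hsi hra Z hX (a := a) (l' := l - a) (by omega)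
  refine ⟨bidiagF_mem hsi hra n X Z hX, fun a b hba => ?_, fun a => ?_, fun a b hab => ?_⟩
  · ext x y
    exact (hwin a).2 ⟨0, by omega⟩ x b y hba
  · ext x y
    refine ((hwin a).1 ⟨0, by omega⟩ ⟨0, by omega⟩ x y).trans ?_
    apply hf.apply_bidiagF_zero_zero hsi hra
    exact fun _ => hX _
  · ext x y
    have hb : b = Fin.castLE (by omega) (Fin.natAdd a (⟨b - a, by omega⟩ : Fin (l - a + 1))) :=
      Fin.ext (by simp; omega)
    simp only [blkS, of_apply, submatrix_apply]
    rw [← sigma_mk_finCast hb y]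
    refine ((hwin a).1 ⟨0, by omega⟩ ⟨b - a, by omega⟩ x _).trans ?_
    -- Up to unfolding `subIdx`, `Fin.castLE`, `Fin.natAdd` and `Fin.cast`, the leading window
    -- of the trailing window at `a` is the sub-bidiagonal matrix of the statement.
    refine hf.apply_bidiagF_castLE hsi hra _ ?_ (l' := b - a) (by omega) ⟨0, by omega⟩
      (Fin.last _) _ _
    exact fun _ => hX _
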